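/- An aggregate ranking obtained by minimizing the cumulative weighted Kendall distance with a decreasing weight function that is not identically zero satisfies the majority criterion: any candidate ranked first by a strict majority of the voters is ranked first in every optimal aggregate. -/

import Mathlib

/-!
Let `a` sit at position `k > 0` in `π`, and let `ρ` be `π` with `a` moved to the top by the
adjacent swaps at positions `k - 1, …, 0`, of total weight `W = φ 0 + ⋯ + φ (k - 1) > 0`.
By the triangle inequality `d(ρ, σ) ≤ d(π, σ) + W` for every vote `σ`. If `σ` ranks `a` first,
then `d(ρ, σ) + W ≤ d(π, σ)`: follow `a` along a word from `π` to `σ`; the letters that move `a`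
pay for `W`, and every other letter can be replayed after `a` has been moved to the top, at a
shifted position that costs no more because `φ` is decreasing. With a strict majority of such
votes, `ρ` beats `π`.
-/

open Equiv Finset

/-- The adjacent transposition swapping positions `i` and `i+1` (0-indexed);
identity if out of range. -/
def adjSwap (n i : ℕ) : Equiv.Perm (Fin n) :=
  if h : i + 1 < n then Equiv.swap ⟨i, Nat.lt_of_succ_lt h⟩ ⟨i + 1, h⟩ else 1

/-- `ω` is between `π` and `σ`: on every pair `{a,b}`, `ω` agrees with `π` or with `σ`. -/
def Between {n : ℕ} (π ω σ : Equiv.Perm (Fin n)) : Prop :=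
  ∀ a b : Fin n, (π⁻¹ a < π⁻¹ b ↔ ω⁻¹ a < ω⁻¹ b) ∨ (σ⁻¹ a < σ⁻¹ b ↔ ω⁻¹ a < ω⁻¹ b)

/-- Kendall tau distance: minimum number of adjacent transpositions transforming `π` into `σ`. -/
noncomputable def kendall {n : ℕ} (π σ : Equiv.Perm (Fin n)) : ℕ :=
  sInf {s | ∃ l : List ℕ, (∀ i ∈ l, i + 1 < n) ∧
    σ = π * (l.map (adjSwap n)).prod ∧ l.length = s}

/-- The set of inversions between `π` and `σ` (each unordered pair `{i,j}` of disagreement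
is recorded as the ordered pair `(i,j)` with `i` ranked before `j` by `π`). -/
def invSet {n : ℕ} (π σ : Equiv.Perm (Fin n)) : Finset (Fin n × Fin n) :=
  Finset.univ.filter fun p => π⁻¹ p.1 < π⁻¹ p.2 ∧ σ⁻¹ p.2 < σ⁻¹ p.1

/-- Elements `j` on whose relative order with `i` the permutations `π` and `σ` disagree. -/
def invWith {n : ℕ} (π σ : Equiv.Perm (Fin n)) (i : Fin n) : Finset (Fin n) :=
  Finset.univ.filter fun j => ¬(π⁻¹ i < π⁻¹ j ↔ σ⁻¹ i < σ⁻¹ j)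

/-- Weighted Kendall distance for weight function `φ` on adjacent transpositions
(`φ h` is the weight of swapping positions `h, h+1`, 0-indexed). -/
noncomputable def wKendall {n : ℕ} (φ : ℕ → ℝ) (π σ : Equiv.Perm (Fin n)) : ℝ :=
  sInf {w | ∃ l : List ℕ, (∀ i ∈ l, i + 1 < n) ∧
    σ = π * (l.map (adjSwap n)).prod ∧ (l.map φ).sum = w}

/-- `w(k:l)`: sum of adjacent-transposition weights between positions `min k l` and `max k l - 1`. -/
def wsum (φ : ℕ → ℝ) (k l : ℕ) : ℝ := ∑ h ∈ Finset.Ico (min k l) (max k l), φ h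

/-- The generalized (weighted) Spearman footrule `D_φ`. -/
noncomputable def DKendall {n : ℕ} (φ : ℕ → ℝ) (π σ : Equiv.Perm (Fin n)) : ℝ :=
  ∑ i : Fin n, wsum φ ((π⁻¹ i : Fin n) : ℕ) ((σ⁻¹ i : Fin n) : ℕ)

/-- Weighted transposition distance with weight function `φ` on transpositions. -/
noncomputable def wTrans {n : ℕ} (φ : Fin n → Fin n → ℝ) (π σ : Equiv.Perm (Fin n)) : ℝ :=
  sInf {w | ∃ l : List (Fin n × Fin n), (∀ p ∈ l, p.1 ≠ p.2) ∧
    σ = π * (l.map fun p => Equiv.swap p.1 p.2).prod ∧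
    (l.map fun p => φ p.1 p.2).sum = w}

/-- Weight of a path (as a list of vertices) in the complete graph `K_φ`. -/
def pathWt {n : ℕ} (φ : Fin n → Fin n → ℝ) (p : List (Fin n)) : ℝ :=
  ((p.zip p.tail).map fun q => φ q.1 q.2).sum

/-- `p` is a path from `a` to `b` (consecutive vertices distinct). -/
def IsPath {n : ℕ} (p : List (Fin n)) (a b : Fin n) : Prop :=
  p.head? = some a ∧ p.getLast? = some b ∧ p.Chain' (· ≠ ·)

/-- Minimum weight of a path from `a` to `b` in `K_φ`. -/
noncomputable def minPathWt {n : ℕ} (φ : Fin n → Fin n → ℝ) (a b : Fin n) : ℝ :=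
  sInf {w | ∃ p : List (Fin n), IsPath p a b ∧ pathWt φ p = w}

/-- The footrule-type lower/upper bounding function `D_φ` for transposition weights. -/
noncomputable def DTrans {n : ℕ} (φ : Fin n → Fin n → ℝ) (π σ : Equiv.Perm (Fin n)) : ℝ :=
  ∑ i : Fin n, minPathWt φ (π⁻¹ i) (σ⁻¹ i)

lemma adjSwap_of_lt {n i : ℕ} (h : i + 1 < n) :
    adjSwap n i = swap ⟨i, Nat.lt_of_succ_lt h⟩ ⟨i + 1, h⟩ := dif_pos h

lemma adjSwap_of_not_lt {n i : ℕ} (h : ¬ i + 1 < n) : adjSwap n i = 1 := dif_neg h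

lemma adjSwap_val {n h : ℕ} (hn : h + 1 < n) (x : Fin n) :
    ((adjSwap n h x : Fin n) : ℕ) =
      if (x : ℕ) = h then h + 1 else if (x : ℕ) = h + 1 then h else x := by
  rw [adjSwap_of_lt hn, swap_apply_def]
  split_ifs <;> simp_all [Fin.ext_iff]

lemma adjSwap_mul_self (n i : ℕ) : adjSwap n i * adjSwap n i = 1 := by
  unfold adjSwap
  split_ifs
  · exact swap_mul_self _ _
  · exact one_mul 1

lemma adjSwap_inv (n i : ℕ) : (adjSwap n i)⁻¹ = adjSwap n i :=
  inv_eq_of_mul_eq_one_right (adjSwap_mul_self n i)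

lemma commute_adjSwap {n i j : ℕ} (hij : i + 2 ≤ j) : Commute (adjSwap n i) (adjSwap n j) := by
  by_cases hi : i + 1 < n
  · by_cases hj : j + 1 < n
    · rw [adjSwap_of_lt hi, adjSwap_of_lt hj]
      refine Perm.Disjoint.commute fun x => ?_
      by_cases hx : (x : ℕ) = i ∨ (x : ℕ) = i + 1
      · right
        apply swap_apply_of_ne_of_ne <;> simp [Fin.ext_iff] <;> omega
      · left
        apply swap_apply_of_ne_of_ne <;> simp [Fin.ext_iff] <;> omega
    · rw [adjSwap_of_not_lt hj]; exact Commute.one_right _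
  · rw [adjSwap_of_not_lt hi]; exact Commute.one_left _

lemma adjSwap_braid {n h : ℕ} (hn : h + 2 < n) :
    adjSwap n h * adjSwap n (h + 1) * adjSwap n h =
      adjSwap n (h + 1) * adjSwap n h * adjSwap n (h + 1) := by
  rw [adjSwap_of_lt (by omega), adjSwap_of_lt hn]
  set x : Fin n := ⟨h, by omega⟩
  set y : Fin n := ⟨h + 1, by omega⟩
  set z : Fin n := ⟨h + 1 + 1, hn⟩
  have hxy : x ≠ y := by simp only [x, y, ne_eq, Fin.ext_iff]; omega
  have hxz : x ≠ z := by simp only [x, z, ne_eq, Fin.ext_iff]; omega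
  have hzy : z ≠ y := by simp only [z, y, ne_eq, Fin.ext_iff]; omega
  calc swap x y * swap y z * swap x y = swap y x * swap z y * swap y x := by
        rw [swap_comm y x, swap_comm z y]
    _ = swap z x := by rw [swap_mul_swap_mul_swap hzy hxz.symm, swap_comm]
    _ = swap y z * swap x y * swap y z := (swap_mul_swap_mul_swap hxy hxz).symm

def adjSwapProd (n : ℕ) (l : List ℕ) : Perm (Fin n) := (l.map (adjSwap n)).prod

@[simp] lemma adjSwapProd_nil (n : ℕ) : adjSwapProd n [] = 1 := rfl

@[simp] lemma adjSwapProd_cons (n i : ℕ) (l : List ℕ) :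
    adjSwapProd n (i :: l) = adjSwap n i * adjSwapProd n l := List.prod_cons

lemma adjSwapProd_append (n : ℕ) (l₁ l₂ : List ℕ) :
    adjSwapProd n (l₁ ++ l₂) = adjSwapProd n l₁ * adjSwapProd n l₂ := by
  simp [adjSwapProd]

lemma exists_adjSwapProd_eq {n : ℕ} (g : Perm (Fin n)) :
    ∃ l : List ℕ, (∀ i ∈ l, i + 1 < n) ∧ adjSwapProd n l = g := by
  cases n with
  | zero => exact ⟨[], by simp, Subsingleton.elim _ _⟩
  | succ k =>
    have hg : g ∈ Submonoid.closure (Set.range fun i : Fin k => swap i.castSucc i.succ) := by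
      rw [Perm.mclosure_swap_castSucc_succ k]; trivial
    obtain ⟨L, hL, rfl⟩ := Submonoid.exists_list_of_mem_closure hg
    clear hg
    induction L with
    | nil => exact ⟨[], by simp, rfl⟩
    | cons y L ih =>
      obtain ⟨l, hl, hlL⟩ := ih fun z hz => hL z (List.mem_cons_of_mem _ hz)
      obtain ⟨i, rfl⟩ := hL y List.mem_cons_self
      refine ⟨i :: l, ?_, ?_⟩
      · simp only [List.mem_cons, forall_eq_or_imp]
        exact ⟨by omega, hl⟩
      · rw [adjSwapProd_cons, hlL, List.prod_cons, adjSwap_of_lt (by omega)]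
        rfl

/-- Right multiplication by `moveToFront n p = s_{p-1} ⋯ s_1 s_0` moves the candidate in
position `p` to the top, shifting the candidates above it down by one. -/
def moveToFront (n p : ℕ) : Perm (Fin n) := adjSwapProd n (List.range p).reverse

@[simp] lemma moveToFront_zero (n : ℕ) : moveToFront n 0 = 1 := rfl

lemma moveToFront_succ (n p : ℕ) : moveToFront n (p + 1) = adjSwap n p * moveToFront n p := by
  simp [moveToFront, List.range_succ]

lemma moveToFront_mul_adjSwapProd_range (n p : ℕ) :
    moveToFront n p * adjSwapProd n (List.range p) = 1 := by
  induction p with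
  | zero => rfl
  | succ p ih =>
    rw [moveToFront_succ, List.range_succ, adjSwapProd_append, mul_assoc,
      ← mul_assoc (moveToFront n p), ih, one_mul]
    simpa using adjSwap_mul_self n p

lemma adjSwap_mul_moveToFront_of_lt {n p q : ℕ} (hpq : p < q) :
    adjSwap n q * moveToFront n p = moveToFront n p * adjSwap n q := by
  induction p with
  | zero => simp
  | succ p ih =>
    rw [moveToFront_succ, ← mul_assoc, ← (commute_adjSwap (show p + 2 ≤ q by omega)).eq,
      mul_assoc, ih (by omega), mul_assoc]

lemma adjSwap_mul_moveToFront_of_add_two_le {n h p : ℕ} (hp : h + 2 ≤ p) (hpn : p < n) :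
    adjSwap n h * moveToFront n p = moveToFront n p * adjSwap n (h + 1) := by
  induction p with
  | zero => omega
  | succ p ih =>
    obtain hlt | rfl := (show h + 2 ≤ p ∨ p = h + 1 by omega)
    · rw [moveToFront_succ, ← mul_assoc, (commute_adjSwap hlt).eq, mul_assoc,
        ih hlt (by omega), ← mul_assoc]
    · simp only [moveToFront_succ, ← mul_assoc]
      rw [adjSwap_braid hpn, mul_assoc _ (adjSwap n (h + 1)),
        adjSwap_mul_moveToFront_of_lt (Nat.lt_succ_self h), ← mul_assoc]

lemma exists_adjSwap_mul_moveToFront {n h : ℕ} {φ : ℕ → ℝ}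
    (hφ0 : ∀ i, i + 1 < n → 0 ≤ φ i) (hdec : ∀ i j, j ≤ i → i + 1 < n → φ i ≤ φ j)
    (hn : h + 1 < n) (x : Fin n) :
    ∃ l : List ℕ, (∀ i ∈ l, i + 1 < n) ∧
      adjSwap n h * moveToFront n (adjSwap n h x) = moveToFront n x * adjSwapProd n l ∧
      (l.map φ).sum + ∑ i ∈ range x, φ i ≤ φ h + ∑ i ∈ range (adjSwap n h x), φ i := by
  rw [adjSwap_val hn]
  obtain hx | hx | hx | hx : (x : ℕ) = h ∨ (x : ℕ) = h + 1 ∨ (x : ℕ) < h ∨ h + 2 ≤ x := by omega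
  · rw [if_pos hx, hx]
    refine ⟨[], by simp, ?_, ?_⟩
    · rw [moveToFront_succ, ← mul_assoc, adjSwap_mul_self]
      simp
    · simp only [sum_range_succ, List.map_nil, List.sum_nil]
      linarith [hφ0 h hn]
  · rw [if_neg (by omega), if_pos hx, hx]
    refine ⟨[], by simp, ?_, ?_⟩
    · rw [moveToFront_succ]
      simp
    · simp only [sum_range_succ, List.map_nil, List.sum_nil]
      linarith
  · rw [if_neg (by omega), if_neg (by omega)]
    refine ⟨[h], by simpa using hn, ?_, ?_⟩
    · rw [adjSwap_mul_moveToFront_of_lt hx]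
      simp
    · simp
  · rw [if_neg (by omega), if_neg (by omega)]
    refine ⟨[h + 1], by simp only [List.mem_singleton, forall_eq]; omega, ?_, ?_⟩
    · rw [adjSwap_mul_moveToFront_of_add_two_le hx x.isLt]
      simp
    · simpa using hdec (h + 1) h (by omega) (by omega)

lemma wKendall_le {n : ℕ} {φ : ℕ → ℝ} (hφ0 : ∀ i, i + 1 < n → 0 ≤ φ i)
    {π σ : Perm (Fin n)} {l : List ℕ} (hl : ∀ i ∈ l, i + 1 < n) (hσ : σ = π * adjSwapProd n l) :
    wKendall φ π σ ≤ (l.map φ).sum := by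
  refine csInf_le ⟨0, ?_⟩ ⟨l, hl, hσ, rfl⟩
  rintro w ⟨l', hl', -, rfl⟩
  exact List.sum_nonneg (by simpa using fun i hi => hφ0 i (hl' i hi))

lemma le_wKendall {n : ℕ} {φ : ℕ → ℝ} {π σ : Perm (Fin n)} {b : ℝ}
    (h : ∀ l : List ℕ, (∀ i ∈ l, i + 1 < n) → σ = π * adjSwapProd n l → b ≤ (l.map φ).sum) :
    b ≤ wKendall φ π σ := by
  obtain ⟨l, hl, hlπσ⟩ := exists_adjSwapProd_eq (π⁻¹ * σ)
  refine le_csInf ⟨_, l, hl, ?_, rfl⟩ ?_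
  · rw [← adjSwapProd, hlπσ, mul_inv_cancel_left]
  · rintro w ⟨l, hl, hσ, rfl⟩
    exact h l hl hσ

lemma wKendall_le_add {n : ℕ} {φ : ℕ → ℝ} (hφ0 : ∀ i, i + 1 < n → 0 ≤ φ i)
    {π σ : Perm (Fin n)} {l : List ℕ} (hl : ∀ i ∈ l, i + 1 < n) :
    wKendall φ π σ ≤ (l.map φ).sum + wKendall φ (π * adjSwapProd n l) σ := by
  rw [← sub_le_iff_le_add']
  refine le_wKendall fun l' hl' hσ => ?_
  rw [sub_le_iff_le_add', ← List.sum_append, ← List.map_append]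
  refine wKendall_le hφ0 ?_ (by rw [hσ, adjSwapProd_append, mul_assoc])
  simpa [or_imp, forall_and] using ⟨hl, hl'⟩

lemma sum_map_range_eq_sum_range {M : Type*} [AddCommMonoid M] (f : ℕ → M) (p : ℕ) :
    ((List.range p).map f).sum = ∑ i ∈ range p, f i := by
  rw [Finset.sum, range_val, Multiset.range, Multiset.map_coe, Multiset.sum_coe]

lemma wKendall_mul_moveToFront_le {n p : ℕ} {φ : ℕ → ℝ} (hφ0 : ∀ i, i + 1 < n → 0 ≤ φ i)
    (hp : p < n) (π σ : Perm (Fin n)) :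
    wKendall φ (π * moveToFront n p) σ ≤ ∑ i ∈ range p, φ i + wKendall φ π σ := by
  have := wKendall_le_add hφ0 (π := π * moveToFront n p) (σ := σ) (l := List.range p)
    (by simp only [List.mem_range]; omega)
  rwa [mul_assoc, moveToFront_mul_adjSwapProd_range, mul_one, sum_map_range_eq_sum_range] at this

lemma wKendall_mul_moveToFront_add_le {n : ℕ} {φ : ℕ → ℝ} (hφ0 : ∀ i, i + 1 < n → 0 ≤ φ i)
    (hdec : ∀ i j, j ≤ i → i + 1 < n → φ i ≤ φ j) {a : Fin n} {σ : Perm (Fin n)}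
    (hσ : ((σ⁻¹ a : Fin n) : ℕ) = 0) (π : Perm (Fin n)) :
    wKendall φ (π * moveToFront n (π⁻¹ a)) σ + ∑ i ∈ range (π⁻¹ a : Fin n), φ i ≤
      wKendall φ π σ := by
  refine le_wKendall fun l hl hπ => ?_
  induction l generalizing π with
  | nil =>
    rw [adjSwapProd_nil, mul_one] at hπ
    subst hπ
    rw [hσ, moveToFront_zero, mul_one, sum_range_zero, add_zero]
    exact wKendall_le hφ0 (π := σ) (σ := σ) (l := []) (by simp) (by simp)
  | cons h l ih =>
    have hn : h + 1 < n := hl h List.mem_cons_self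
    obtain ⟨l₀, hl₀, hmove, hsum⟩ := exists_adjSwap_mul_moveToFront hφ0 hdec hn (π⁻¹ a)
    have hpos : (π * adjSwap n h)⁻¹ a = adjSwap n h (π⁻¹ a) := by
      rw [mul_inv_rev, adjSwap_inv, Perm.mul_apply]
    have ih' := ih (π * adjSwap n h) (fun i hi => hl i (List.mem_cons_of_mem _ hi))
      (by rw [hπ, adjSwapProd_cons, mul_assoc])
    rw [hpos, mul_assoc, hmove, ← mul_assoc] at ih'
    have := wKendall_le_add hφ0 (π := π * moveToFront n (π⁻¹ a)) (σ := σ) hl₀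
    simp only [List.map_cons, List.sum_cons]
    linarith

lemma sum_lt_sum_of_majority {ι : Type*} [Fintype ι] {f g : ι → ℝ} {c : ℝ} (hc : 0 < c)
    {t : Finset ι} (ht : Fintype.card ι < 2 * #t) (hle : ∀ i, f i ≤ c + g i)
    (hlt : ∀ i ∈ t, f i + c ≤ g i) :
    ∑ i, f i < ∑ i, g i := by
  classical
  have hcard : #tᶜ < #t := by rw [card_compl]; omega
  calc ∑ i, f i = ∑ i ∈ t, f i + ∑ i ∈ tᶜ, f i := (sum_add_sum_compl t f).symm
    _ ≤ ∑ i ∈ t, (g i - c) + ∑ i ∈ tᶜ, (c + g i) :=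
        add_le_add (sum_le_sum fun i hi => le_sub_iff_add_le.2 (hlt i hi))
          (sum_le_sum fun i _ => hle i)
    _ = ∑ i, g i - (#t - #tᶜ) * c := by
        rw [sum_sub_distrib, sum_add_distrib, ← sum_add_sum_compl t g]
        simp only [sum_const, nsmul_eq_mul]
        ring
    _ < ∑ i, g i := sub_lt_self _ (mul_pos (sub_pos.2 (by exact_mod_cast hcard)) hc)

theorem stmt10 (n m : ℕ) (φ : ℕ → ℝ)
    (hφ0 : ∀ i, i + 1 < n → 0 ≤ φ i)
    (hdec : ∀ i j, j ≤ i → i + 1 < n → φ i ≤ φ j)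
    (hne : ∃ i, i + 1 < n ∧ 0 < φ i)
    (σ : Fin m → Equiv.Perm (Fin n)) (a : Fin n)
    (hmaj : m < 2 * (Finset.univ.filter fun j : Fin m => (((σ j)⁻¹ a : Fin n) : ℕ) = 0).card)
    (π : Equiv.Perm (Fin n))
    (hopt : ∀ ρ : Equiv.Perm (Fin n),
      ∑ j : Fin m, wKendall φ π (σ j) ≤ ∑ j : Fin m, wKendall φ ρ (σ j)) :
    ((π⁻¹ a : Fin n) : ℕ) = 0 := by
  by_contra hk
  obtain ⟨i₀, hi₀, hφi₀⟩ := hne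
  have hcost : 0 < ∑ i ∈ range (π⁻¹ a : Fin n), φ i := by
    obtain ⟨k, hk'⟩ := Nat.exists_eq_succ_of_ne_zero hk
    rw [hk', sum_range_succ']
    have := (π⁻¹ a).isLt
    have : 0 ≤ ∑ i ∈ range k, φ (i + 1) := sum_nonneg fun i hi => hφ0 _ (by rw [mem_range] at hi; omega)
    linarith [hdec i₀ 0 (Nat.zero_le _) hi₀]
  refine (hopt (π * moveToFront n (π⁻¹ a))).not_gt (sum_lt_sum_of_majority hcost
    (by simpa using hmaj) (fun j => wKendall_mul_moveToFront_le hφ0 (π⁻¹ a).isLt π (σ j)) ?_)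
  intro j hj
  exact wKendall_mul_moveToFront_add_le hφ0 hdec (mem_filter.1 hj).2 π
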